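/- arXiv:math/9910008 — 4 statements merged into one kernel-verified Lean document; each statement's English description precedes it below -/
import Mathlib

section
/- The image of the map SU(2) × SU(2) → ℝ³ given by (A,B) ↦ (tr A, tr B, tr(A·B)) (all traces being real) is exactly the set E = {(x,y,z) ∈ [−2,2]³ : −2 ≤ κ(x,y,z) ≤ 2}. In particular, for every (x,y,z) ∈ [−2,2]³ with −2 ≤ κ(x,y,z) ≤ 2 there exist A, B ∈ SU(2) with tr A = x, tr B = y and tr(A·B) = z, and conversely every trace triple of a pair in SU(2) lies in E. -/
/-- `SU(2)`: the subgroup of the `2 × 2` complex unitary group consisting of the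
matrices of determinant one. -/
noncomputable def SU2 : Subgroup (Matrix.unitaryGroup (Fin 2) ℂ) where
  carrier := {A | Matrix.det (A : Matrix (Fin 2) (Fin 2) ℂ) = 1}
  mul_mem' := by
    intro a b ha hb
    simp only [Set.mem_setOf_eq, Matrix.UnitaryGroup.mul_val, Matrix.det_mul] at *
    rw [ha, hb, mul_one]
  one_mem' := by simp
  inv_mem' := by
    intro a ha
    simp only [Set.mem_setOf_eq, Matrix.UnitaryGroup.inv_val] at *
    show Matrix.det (star a.val) = 1
    rw [Matrix.star_eq_conjTranspose, Matrix.det_conjTranspose, ha, star_one]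

/-- The underlying `2 × 2` complex matrix of an element of `SU(2)`. -/
noncomputable def matSU (A : SU2) : Matrix (Fin 2) (Fin 2) ℂ :=
  ((A : Matrix.unitaryGroup (Fin 2) ℂ) : Matrix (Fin 2) (Fin 2) ℂ)

/-- The trace of an element of `SU(2)`, as a real number. -/
noncomputable def trSU (A : SU2) : ℝ := (Matrix.trace (matSU A)).re

/-- `κ(x,y,z) = x² + y² + z² − xyz − 2`. -/
def kappa (p : ℝ × ℝ × ℝ) : ℝ :=
  p.1 ^ 2 + p.2.1 ^ 2 + p.2.2 ^ 2 - p.1 * p.2.1 * p.2.2 - 2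

/-- The set `E = {(x,y,z) ∈ [−2,2]³ : −2 ≤ κ(x,y,z) ≤ 2}`. -/
def E : Set (ℝ × ℝ × ℝ) :=
  {p | p.1 ∈ Set.Icc (-2 : ℝ) 2 ∧ p.2.1 ∈ Set.Icc (-2 : ℝ) 2 ∧ p.2.2 ∈ Set.Icc (-2 : ℝ) 2 ∧
    -2 ≤ kappa p ∧ kappa p ≤ 2}

/-! ### Auxiliary constructions -/

lemma SU2.mk_mem_unitary (a b : ℂ) (h : Complex.normSq a + Complex.normSq b = 1) :
    !![a, b; -(starRingEnd ℂ) b, (starRingEnd ℂ) a] ∈ Matrix.unitaryGroup (Fin 2) ℂ := by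
  rw [Matrix.mem_unitaryGroup_iff]
  have hs : star (!![a, b; -(starRingEnd ℂ) b, (starRingEnd ℂ) a]) =
      !![(starRingEnd ℂ) a, -b; (starRingEnd ℂ) b, a] := by
    ext i j; fin_cases i <;> fin_cases j <;> simp [Matrix.star_apply]
  have h' : (Complex.normSq a : ℂ) + Complex.normSq b = 1 := by exact_mod_cast h
  have hab : a * (starRingEnd ℂ) a + b * (starRingEnd ℂ) b = 1 := by
    rw [Complex.mul_conj, Complex.mul_conj]; exact h'
  rw [hs, Matrix.mul_fin_two]
  ext i j
  fin_cases i <;> fin_cases j <;> simp [Matrix.one_fin_two]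
  · exact hab
  · ring
  · ring
  · linear_combination hab

lemma SU2.mk_det (a b : ℂ) (h : Complex.normSq a + Complex.normSq b = 1) :
    Matrix.det !![a, b; -(starRingEnd ℂ) b, (starRingEnd ℂ) a] = 1 := by
  rw [Matrix.det_fin_two_of]
  have h' : (Complex.normSq a : ℂ) + Complex.normSq b = 1 := by exact_mod_cast h
  rw [← Complex.mul_conj a, ← Complex.mul_conj b] at h'
  linear_combination h'

noncomputable def mkSU (a b : ℂ) (h : Complex.normSq a + Complex.normSq b = 1) : SU2 :=
  ⟨⟨!![a, b; -(starRingEnd ℂ) b, (starRingEnd ℂ) a], SU2.mk_mem_unitary a b h⟩,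
    SU2.mk_det a b h⟩

lemma matSU_mkSU (a b : ℂ) (h : Complex.normSq a + Complex.normSq b = 1) :
    matSU (mkSU a b h) = !![a, b; -(starRingEnd ℂ) b, (starRingEnd ℂ) a] := rfl

lemma matSU_mul (A B : SU2) : matSU (A * B) = matSU A * matSU B := rfl

/-- Every element of `SU(2)` has the standard form. -/
lemma matSU_form (A : SU2) : ∃ a b : ℂ, Complex.normSq a + Complex.normSq b = 1 ∧
    matSU A = !![a, b; -(starRingEnd ℂ) b, (starRingEnd ℂ) a] := by
  have hdet : (matSU A).det = 1 := A.2
  have hu : matSU A ∈ Matrix.unitaryGroup (Fin 2) ℂ := A.1.2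
  have h1 : matSU A * star (matSU A) = 1 := Matrix.mem_unitaryGroup_iff.mp hu
  have hinv : (matSU A)⁻¹ = star (matSU A) := Matrix.inv_eq_right_inv h1
  have hadj : (matSU A)⁻¹ = (matSU A).adjugate := by
    rw [Matrix.inv_def, hdet]; simp
  have hstar : star (matSU A) = (matSU A).adjugate := by rw [← hinv, hadj]
  rw [Matrix.adjugate_fin_two] at hstar
  have h11 : matSU A 1 1 = (starRingEnd ℂ) (matSU A 0 0) := by
    have := congrFun (congrFun hstar 0) 0
    simpa [Matrix.star_apply] using this.symm
  have h10 : matSU A 1 0 = -(starRingEnd ℂ) (matSU A 0 1) := by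
    have := congrFun (congrFun hstar 0) 1
    simp only [Matrix.star_apply] at this
    have := congrArg (starRingEnd ℂ) this
    simpa using this
  refine ⟨matSU A 0 0, matSU A 0 1, ?_, ?_⟩
  · have hd : (matSU A).det = matSU A 0 0 * matSU A 1 1 - matSU A 0 1 * matSU A 1 0 :=
      Matrix.det_fin_two _
    rw [hdet, h11, h10] at hd
    have : ((Complex.normSq (matSU A 0 0) : ℂ)) + Complex.normSq (matSU A 0 1) = 1 := by
      rw [← Complex.mul_conj, ← Complex.mul_conj]
      linear_combination -hd
    exact_mod_cast this
  · ext i j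
    fin_cases i <;> fin_cases j
    · rfl
    · rfl
    · simpa using h10
    · simpa using h11

lemma trSU_eq (A : SU2) (a b : ℂ)
    (hA : matSU A = !![a, b; -(starRingEnd ℂ) b, (starRingEnd ℂ) a]) :
    trSU A = 2 * a.re := by
  rw [trSU, hA, Matrix.trace_fin_two]
  simp [Complex.add_re]
  ring

lemma trSU_mul_eq (A B : SU2) (a b c d : ℂ)
    (hA : matSU A = !![a, b; -(starRingEnd ℂ) b, (starRingEnd ℂ) a])
    (hB : matSU B = !![c, d; -(starRingEnd ℂ) d, (starRingEnd ℂ) c]) :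
    trSU (A * B) = 2 * ((a.re * c.re - a.im * c.im) - (b.re * d.re + b.im * d.im)) := by
  rw [trSU, matSU_mul, hA, hB, Matrix.mul_fin_two, Matrix.trace_fin_two]
  simp [Complex.add_re, Complex.mul_re, Complex.neg_re, Complex.neg_im,
    Complex.conj_re, Complex.conj_im]
  ring

/-! ### Real arithmetic -/

lemma kappa_lower (x y z : ℝ) (hz1 : -2 ≤ z) (hz2 : z ≤ 2) :
    -2 ≤ x^2 + y^2 + z^2 - x*y*z - 2 := by
  nlinarith [mul_nonneg (by linarith : (0:ℝ) ≤ 2 - z) (sq_nonneg (x - y)),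
    mul_nonneg (by linarith : (0:ℝ) ≤ 2 + z) (sq_nonneg (x + y)), sq_nonneg z]

lemma kappa_upper (x y z : ℝ) (h : (2*z - x*y)^2 ≤ (4 - x^2)*(4 - y^2)) :
    x^2 + y^2 + z^2 - x*y*z - 2 ≤ 2 := by nlinarith [h]

lemma abs_le_two (x : ℝ) (h : x^2 ≤ 4) : -2 ≤ x ∧ x ≤ 2 := by
  constructor <;> nlinarith [sq_nonneg (x-2), sq_nonneg (x+2)]

lemma mem_E_of (x y z : ℝ) (hx : x^2 ≤ 4) (hy : y^2 ≤ 4) (hz : z^2 ≤ 4)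
    (h : (2*z - x*y)^2 ≤ (4 - x^2)*(4 - y^2)) : (x, y, z) ∈ E := by
  obtain ⟨hz1, hz2⟩ := abs_le_two z hz
  exact ⟨Set.mem_Icc.2 (abs_le_two x hx), Set.mem_Icc.2 (abs_le_two y hy),
    Set.mem_Icc.2 ⟨hz1, hz2⟩, kappa_lower x y z hz1 hz2, kappa_upper x y z h⟩

lemma fwd_real (a1 a2 b1 b2 c1 c2 d1 d2 x y z : ℝ)
    (hA : a1^2 + a2^2 + b1^2 + b2^2 = 1) (hB : c1^2 + c2^2 + d1^2 + d2^2 = 1)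
    (hx : x = 2*a1) (hy : y = 2*c1)
    (hz : z = 2*((a1*c1 - a2*c2) - (b1*d1 + b2*d2))) :
    (x, y, z) ∈ E := by
  subst hx hy hz
  apply mem_E_of
  · nlinarith [sq_nonneg a2, sq_nonneg b1, sq_nonneg b2]
  · nlinarith [sq_nonneg c2, sq_nonneg d1, sq_nonneg d2]
  · nlinarith [sq_nonneg (a1*c2 + a2*c1), sq_nonneg (a1*d1 + b1*c1),
      sq_nonneg (a1*d2 + b2*c1), sq_nonneg (a2*d1 - b1*c2),
      sq_nonneg (a2*d2 - b2*c2), sq_nonneg (b1*d2 - b2*d1)]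
  · have cs : (a2*c2 + b1*d1 + b2*d2)^2 ≤ (a2^2 + b1^2 + b2^2) * (c2^2 + d1^2 + d2^2) := by
      nlinarith [sq_nonneg (a2*d1 - b1*c2), sq_nonneg (a2*d2 - b2*c2), sq_nonneg (b1*d2 - b2*d1)]
    have e1 : 4 - (2*a1)^2 = 4*(a2^2 + b1^2 + b2^2) := by nlinarith []
    have e2 : 4 - (2*c1)^2 = 4*(c2^2 + d1^2 + d2^2) := by nlinarith []
    have e3 : 2*(2*((a1*c1 - a2*c2) - (b1*d1 + b2*d2))) - (2*a1)*(2*c1)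
        = -4*(a2*c2 + b1*d1 + b2*d2) := by ring
    rw [e1, e2, e3]
    nlinarith [cs]

lemma rev_real (x y z : ℝ) (h : (x, y, z) ∈ E) :
    ∃ a2 c2 d1 : ℝ, (x/2)^2 + a2^2 = 1 ∧ (y/2)^2 + c2^2 + d1^2 = 1 ∧
      z = 2*((x/2)*(y/2) - a2*c2) := by
  obtain ⟨hxI, hyI, hzI, hk1, hk2⟩ := h
  have hx1 : -2 ≤ x := (Set.mem_Icc.1 hxI).1
  have hx2 : x ≤ 2 := (Set.mem_Icc.1 hxI).2
  have hy1 : -2 ≤ y := (Set.mem_Icc.1 hyI).1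
  have hy2 : y ≤ 2 := (Set.mem_Icc.1 hyI).2
  simp only [kappa] at hk2
  have hk2' : x^2 + y^2 + z^2 - x*y*z ≤ 4 := by linarith [hk2]
  set s := Real.sqrt (1 - (x/2)^2) with hsdef
  have hs2 : s^2 = 1 - (x/2)^2 := Real.sq_sqrt (by nlinarith)
  have hsnn : 0 ≤ s := Real.sqrt_nonneg _
  set t := (x*y/2 - z)/(2*s) with htdef
  have key : (x*y/2 - z)^2 ≤ 4*s^2*(1 - (y/2)^2) := by
    rw [hs2]; nlinarith [hk2']
  have ht2 : t^2 ≤ 1 - (y/2)^2 := by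
    by_cases hs0 : s = 0
    · rw [htdef, hs0]
      norm_num
      rw [abs_le]
      constructor <;> linarith
    · have hspos : 0 < s := lt_of_le_of_ne hsnn (Ne.symm hs0)
      rw [htdef, div_pow, div_le_iff₀ (by positivity)]
      calc (x*y/2 - z)^2 ≤ 4*s^2*(1 - (y/2)^2) := key
        _ = (1 - (y/2)^2) * (2*s)^2 := by ring
  refine ⟨s, t, Real.sqrt (1 - (y/2)^2 - t^2), by linarith [hs2], ?_, ?_⟩
  · have : (Real.sqrt (1 - (y/2)^2 - t^2))^2 = 1 - (y/2)^2 - t^2 :=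
      Real.sq_sqrt (by linarith)
    linarith [this]
  · by_cases hs0 : s = 0
    · have hx4 : x^2 = 4 := by
        have := hs2; rw [hs0] at this; nlinarith [this]
      have hzeq : z = x*y/2 := by
        have h0 : (z - x*y/2)^2 ≤ 0 := by nlinarith [hk2', hx4]
        have := le_antisymm h0 (sq_nonneg _)
        have := pow_eq_zero_iff (n := 2) (by norm_num) |>.1 this
        linarith [this]
      rw [hs0, hzeq]; ring
    · have hspos : 0 < s := lt_of_le_of_ne hsnn (Ne.symm hs0)
      rw [htdef]
      field_simp
      ring

/-- The image of `SU(2) × SU(2) → ℝ³`, `(A,B) ↦ (tr A, tr B, tr(A·B))`, is exactly `E`. -/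
theorem range_trace_triple_eq :
    (Set.range fun AB : SU2 × SU2 => (trSU AB.1, trSU AB.2, trSU (AB.1 * AB.2))) = E := by
  apply Set.eq_of_subset_of_subset
  · rintro p ⟨⟨A, B⟩, rfl⟩
    obtain ⟨a, b, hab, hA⟩ := matSU_form A
    obtain ⟨c, d, hcd, hB⟩ := matSU_form B
    simp only
    rw [trSU_eq A a b hA, trSU_eq B c d hB, trSU_mul_eq A B a b c d hA hB]
    apply fwd_real a.re a.im b.re b.im c.re c.im d.re d.im
    · rw [Complex.normSq_apply, Complex.normSq_apply] at hab; linear_combination hab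
    · rw [Complex.normSq_apply, Complex.normSq_apply] at hcd; linear_combination hcd
    · rfl
    · rfl
    · rfl
  · intro p hp
    obtain ⟨x, y, z⟩ := p
    obtain ⟨a2, c2, d1, hA, hB, hz⟩ := rev_real x y z hp
    have ha : Complex.normSq ⟨x/2, a2⟩ + Complex.normSq 0 = 1 := by
      rw [Complex.normSq_mk]; simp; linear_combination hA
    have hc : Complex.normSq ⟨y/2, c2⟩ + Complex.normSq ⟨d1, 0⟩ = 1 := by
      rw [Complex.normSq_mk, Complex.normSq_mk]; linear_combination hB
    refine ⟨(mkSU ⟨x/2, a2⟩ 0 ha, mkSU ⟨y/2, c2⟩ ⟨d1, 0⟩ hc), ?_⟩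
    simp only
    rw [trSU_eq _ _ _ (matSU_mkSU _ _ ha), trSU_eq _ _ _ (matSU_mkSU _ _ hc),
      trSU_mul_eq _ _ _ _ _ _ (matSU_mkSU _ _ ha) (matSU_mkSU _ _ hc)]
    refine Prod.ext ?_ (Prod.ext ?_ ?_) <;> simp <;> linarith [hz]
end

section
/- For every (x,y,z) ∈ ℝ³, κ(τ_X(x,y,z)) = κ(x,y,z) and κ(τ_Y(x,y,z)) = κ(x,y,z). Moreover τ_X and τ_Y restrict to bijections of E onto itself, and for each k ∈ [−2,2] they restrict to bijections of E_k onto itself; in particular, if (x,y,z) ∈ [−2,2]³ and −2 ≤ κ(x,y,z) ≤ 2, then |xz − y| ≤ 2 and |yz − x| ≤ 2. -/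
/-- The Dehn twist `τ_X(x,y,z) = (x, z, xz − y)`. -/
def tauX (p : ℝ × ℝ × ℝ) : ℝ × ℝ × ℝ := (p.1, p.2.2, p.1 * p.2.2 - p.2.1)

/-- The Dehn twist `τ_Y(x,y,z) = (z, y, yz − x)`. -/
def tauY (p : ℝ × ℝ × ℝ) : ℝ × ℝ × ℝ := (p.2.2, p.2.1, p.2.1 * p.2.2 - p.1)

/-- The level set `E_k = {(x,y,z) ∈ [−2,2]³ : κ(x,y,z) = k}`. -/
def Ek (k : ℝ) : Set (ℝ × ℝ × ℝ) :=
  {p | p.1 ∈ Set.Icc (-2 : ℝ) 2 ∧ p.2.1 ∈ Set.Icc (-2 : ℝ) 2 ∧ p.2.2 ∈ Set.Icc (-2 : ℝ) 2 ∧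
    kappa p = k}

lemma key (a b c k : ℝ) (ha : -2 ≤ a) (ha2 : a ≤ 2) (hb : -2 ≤ b) (hb2 : b ≤ 2)
    (hk : a^2 + b^2 + c^2 - a*b*c - 2 = k) (h1 : -2 ≤ k) (h2 : k ≤ 2) :
    |a*b - c| ≤ 2 := by
  have hab1 : a*b ≤ 4 := by nlinarith [mul_nonneg (by linarith : (0:ℝ) ≤ 2-a) (by linarith : (0:ℝ) ≤ 2+b), mul_nonneg (by linarith : (0:ℝ) ≤ 2+a) (by linarith : (0:ℝ) ≤ 2-b)]
  have hab2 : -4 ≤ a*b := by nlinarith [mul_nonneg (by linarith : (0:ℝ) ≤ 2-a) (by linarith : (0:ℝ) ≤ 2-b), mul_nonneg (by linarith : (0:ℝ) ≤ 2+a) (by linarith : (0:ℝ) ≤ 2+b)]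
  have hw : (a*b-c)^2 - a*b*(a*b-c) + (a^2+b^2-2-k) = 0 := by linear_combination hk
  rw [abs_le]
  constructor
  · by_contra h
    push_neg at h
    have h3 : (0:ℝ) < -2 - (a*b-c) := by linarith
    nlinarith [sq_nonneg (a+b), mul_pos h3 h3]
  · by_contra h
    push_neg at h
    have h3 : (0:ℝ) < (a*b-c) - 2 := by linarith
    have h4 : (0:ℝ) < (a*b-c) + 2 - a*b := by linarith
    nlinarith [sq_nonneg (a-b), mul_pos h3 h4]

lemma kX (p : ℝ × ℝ × ℝ) : kappa (tauX p) = kappa p := by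
  simp only [kappa, tauX]; ring

lemma kY (p : ℝ × ℝ × ℝ) : kappa (tauY p) = kappa p := by
  simp only [kappa, tauY]; ring

def invX (p : ℝ × ℝ × ℝ) : ℝ × ℝ × ℝ := (p.1, p.1 * p.2.1 - p.2.2, p.2.1)
def invY (p : ℝ × ℝ × ℝ) : ℝ × ℝ × ℝ := (p.1 * p.2.1 - p.2.2, p.2.1, p.1)

lemma invX_tauX (p : ℝ × ℝ × ℝ) : invX (tauX p) = p := by
  obtain ⟨x, y, z⟩ := p
  show (x, x * z - (x * z - y), z) = (x, y, z)
  rw [show x * z - (x * z - y) = y by ring]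

lemma tauX_invX (p : ℝ × ℝ × ℝ) : tauX (invX p) = p := by
  obtain ⟨x, y, z⟩ := p
  show (x, y, x * y - (x * y - z)) = (x, y, z)
  rw [show x * y - (x * y - z) = z by ring]

lemma invY_tauY (p : ℝ × ℝ × ℝ) : invY (tauY p) = p := by
  obtain ⟨x, y, z⟩ := p
  show (z * y - (y * z - x), y, z) = (x, y, z)
  rw [show z * y - (y * z - x) = x by ring]

lemma tauY_invY (p : ℝ × ℝ × ℝ) : tauY (invY p) = p := by
  obtain ⟨x, y, z⟩ := p
  show (x, y, y * x - (x * y - z)) = (x, y, z)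
  rw [show y * x - (x * y - z) = z by ring]

lemma kiX (p : ℝ × ℝ × ℝ) : kappa (invX p) = kappa p := by
  simp only [kappa, invX]; ring

lemma kiY (p : ℝ × ℝ × ℝ) : kappa (invY p) = kappa p := by
  simp only [kappa, invY]; ring

-- membership lemmas
lemma memE_tauX {p : ℝ × ℝ × ℝ} (hp : p ∈ E) : tauX p ∈ E := by
  obtain ⟨x, y, z⟩ := p
  obtain ⟨⟨hx1, hx2⟩, ⟨hy1, hy2⟩, ⟨hz1, hz2⟩, hk1, hk2⟩ := hp
  have hkey := key x z y (kappa (x, y, z)) hx1 hx2 hz1 hz2 (by simp only [kappa]; try ring) hk1 hk2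
  rw [abs_le] at hkey
  have hq : kappa (x, z, x*z - y) = kappa (x, y, z) := by simp only [kappa]; ring
  refine ⟨⟨hx1, hx2⟩, ⟨hz1, hz2⟩, ⟨hkey.1, hkey.2⟩, ?_, ?_⟩ <;>
    · show _ ≤ _
      first
      | (show (-2:ℝ) ≤ kappa (x, z, x*z - y); rw [hq]; exact hk1)
      | (show kappa (x, z, x*z - y) ≤ 2; rw [hq]; exact hk2)

lemma memE_tauY {p : ℝ × ℝ × ℝ} (hp : p ∈ E) : tauY p ∈ E := by
  obtain ⟨x, y, z⟩ := p
  obtain ⟨⟨hx1, hx2⟩, ⟨hy1, hy2⟩, ⟨hz1, hz2⟩, hk1, hk2⟩ := hp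
  have hkey := key y z x (kappa (x, y, z)) hy1 hy2 hz1 hz2 (by simp only [kappa]; try ring) hk1 hk2
  rw [abs_le] at hkey
  have hq : kappa (z, y, y*z - x) = kappa (x, y, z) := by simp only [kappa]; ring
  exact ⟨⟨hz1, hz2⟩, ⟨hy1, hy2⟩, ⟨hkey.1, hkey.2⟩, by rw [show tauY (x,y,z) = (z, y, y*z-x) from rfl, hq]; exact hk1, by rw [show tauY (x,y,z) = (z, y, y*z-x) from rfl, hq]; exact hk2⟩

lemma memE_invX {p : ℝ × ℝ × ℝ} (hp : p ∈ E) : invX p ∈ E := by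
  obtain ⟨x, y, z⟩ := p
  obtain ⟨⟨hx1, hx2⟩, ⟨hy1, hy2⟩, ⟨hz1, hz2⟩, hk1, hk2⟩ := hp
  have hkey := key x y z (kappa (x, y, z)) hx1 hx2 hy1 hy2 (by simp only [kappa]; try ring) hk1 hk2
  rw [abs_le] at hkey
  have hq : kappa (x, x*y - z, y) = kappa (x, y, z) := by simp only [kappa]; ring
  exact ⟨⟨hx1, hx2⟩, ⟨hkey.1, hkey.2⟩, ⟨hy1, hy2⟩, by rw [show invX (x,y,z) = (x, x*y-z, y) from rfl, hq]; exact hk1, by rw [show invX (x,y,z) = (x, x*y-z, y) from rfl, hq]; exact hk2⟩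

lemma memE_invY {p : ℝ × ℝ × ℝ} (hp : p ∈ E) : invY p ∈ E := by
  obtain ⟨x, y, z⟩ := p
  obtain ⟨⟨hx1, hx2⟩, ⟨hy1, hy2⟩, ⟨hz1, hz2⟩, hk1, hk2⟩ := hp
  have hkey := key x y z (kappa (x, y, z)) hx1 hx2 hy1 hy2 (by simp only [kappa]; try ring) hk1 hk2
  rw [abs_le] at hkey
  have hq : kappa (x*y - z, y, x) = kappa (x, y, z) := by simp only [kappa]; ring
  exact ⟨⟨hkey.1, hkey.2⟩, ⟨hy1, hy2⟩, ⟨hx1, hx2⟩, by rw [show invY (x,y,z) = (x*y-z, y, x) from rfl, hq]; exact hk1, by rw [show invY (x,y,z) = (x*y-z, y, x) from rfl, hq]; exact hk2⟩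

lemma memEk_tauX {k : ℝ} (h1 : -2 ≤ k) (h2 : k ≤ 2) {p : ℝ × ℝ × ℝ} (hp : p ∈ Ek k) :
    tauX p ∈ Ek k := by
  obtain ⟨x, y, z⟩ := p
  obtain ⟨⟨hx1, hx2⟩, ⟨hy1, hy2⟩, ⟨hz1, hz2⟩, hk⟩ := hp
  have hkey := key x z y k hx1 hx2 hz1 hz2 (by rw [← hk]; simp only [kappa]; try ring) h1 h2
  rw [abs_le] at hkey
  exact ⟨⟨hx1, hx2⟩, ⟨hz1, hz2⟩, ⟨hkey.1, hkey.2⟩, (kX (x,y,z)).trans hk⟩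

lemma memEk_tauY {k : ℝ} (h1 : -2 ≤ k) (h2 : k ≤ 2) {p : ℝ × ℝ × ℝ} (hp : p ∈ Ek k) :
    tauY p ∈ Ek k := by
  obtain ⟨x, y, z⟩ := p
  obtain ⟨⟨hx1, hx2⟩, ⟨hy1, hy2⟩, ⟨hz1, hz2⟩, hk⟩ := hp
  have hkey := key y z x k hy1 hy2 hz1 hz2 (by rw [← hk]; simp only [kappa]; try ring) h1 h2
  rw [abs_le] at hkey
  exact ⟨⟨hz1, hz2⟩, ⟨hy1, hy2⟩, ⟨hkey.1, hkey.2⟩, (kY (x,y,z)).trans hk⟩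

lemma memEk_invX {k : ℝ} (h1 : -2 ≤ k) (h2 : k ≤ 2) {p : ℝ × ℝ × ℝ} (hp : p ∈ Ek k) :
    invX p ∈ Ek k := by
  obtain ⟨x, y, z⟩ := p
  obtain ⟨⟨hx1, hx2⟩, ⟨hy1, hy2⟩, ⟨hz1, hz2⟩, hk⟩ := hp
  have hkey := key x y z k hx1 hx2 hy1 hy2 (by rw [← hk]; simp only [kappa]; try ring) h1 h2
  rw [abs_le] at hkey
  exact ⟨⟨hx1, hx2⟩, ⟨hkey.1, hkey.2⟩, ⟨hy1, hy2⟩, (kiX (x,y,z)).trans hk⟩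

lemma memEk_invY {k : ℝ} (h1 : -2 ≤ k) (h2 : k ≤ 2) {p : ℝ × ℝ × ℝ} (hp : p ∈ Ek k) :
    invY p ∈ Ek k := by
  obtain ⟨x, y, z⟩ := p
  obtain ⟨⟨hx1, hx2⟩, ⟨hy1, hy2⟩, ⟨hz1, hz2⟩, hk⟩ := hp
  have hkey := key x y z k hx1 hx2 hy1 hy2 (by rw [← hk]; simp only [kappa]; try ring) h1 h2
  rw [abs_le] at hkey
  exact ⟨⟨hkey.1, hkey.2⟩, ⟨hy1, hy2⟩, ⟨hx1, hx2⟩, (kiY (x,y,z)).trans hk⟩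

lemma tauX_inj : Function.Injective tauX :=
  Function.LeftInverse.injective invX_tauX

lemma tauY_inj : Function.Injective tauY :=
  Function.LeftInverse.injective invY_tauY

/-- `κ` is invariant under `τ_X` and `τ_Y`; these maps restrict to bijections of `E` and of
each level set `E_k` (`k ∈ [−2,2]`); in particular `|xz − y| ≤ 2` and `|yz − x| ≤ 2` whenever
`(x,y,z) ∈ [−2,2]³` satisfies `−2 ≤ κ(x,y,z) ≤ 2`. -/
theorem dehn_twists_preserve_kappa :
    (∀ p : ℝ × ℝ × ℝ, kappa (tauX p) = kappa p ∧ kappa (tauY p) = kappa p) ∧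
    Set.BijOn tauX E E ∧ Set.BijOn tauY E E ∧
    (∀ k : ℝ, -2 ≤ k → k ≤ 2 → Set.BijOn tauX (Ek k) (Ek k) ∧ Set.BijOn tauY (Ek k) (Ek k)) ∧
    (∀ x y z : ℝ, (x, y, z) ∈ E → |x * z - y| ≤ 2 ∧ |y * z - x| ≤ 2) := by
  refine ⟨fun p => ⟨kX p, kY p⟩, ⟨fun p hp => memE_tauX hp, tauX_inj.injOn, ?_⟩,
    ⟨fun p hp => memE_tauY hp, tauY_inj.injOn, ?_⟩, fun k h1 h2 =>
    ⟨⟨fun p hp => memEk_tauX h1 h2 hp, tauX_inj.injOn, ?_⟩,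
     ⟨fun p hp => memEk_tauY h1 h2 hp, tauY_inj.injOn, ?_⟩⟩, ?_⟩
  · exact fun p hp => ⟨invX p, memE_invX hp, tauX_invX p⟩
  · exact fun p hp => ⟨invY p, memE_invY hp, tauY_invY p⟩
  · exact fun p hp => ⟨invX p, memEk_invX h1 h2 hp, tauX_invX p⟩
  · exact fun p hp => ⟨invY p, memEk_invY h1 h2 hp, tauY_invY p⟩
  · intro x y z hp
    obtain ⟨⟨hx1, hx2⟩, ⟨hy1, hy2⟩, ⟨hz1, hz2⟩, hk1, hk2⟩ := hp
    exact ⟨key x z y (kappa (x,y,z)) hx1 hx2 hz1 hz2 (by simp only [kappa]; try ring) hk1 hk2,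
      key y z x (kappa (x,y,z)) hy1 hy2 hz1 hz2 (by simp only [kappa]; try ring) hk1 hk2⟩
end

section
/- For every k with −2 < k < 2, the level set E_k = {(x,y,z) ∈ [−2,2]³ : κ(x,y,z) = k}, with the subspace topology from ℝ³, is homeomorphic to the standard 2-sphere S² = {v ∈ ℝ³ : |v| = 1}. -/
/-!
In the coordinates `(x, y, w)` with `w = 2z - xy` one has `8 - 4κ = (4 - x²)(4 - y²) - w²`, so
`E_k` becomes `{|x|, |y| ≤ 2, (4 - x²)(4 - y²) - w² = 8 - 4k}`; the bound `|z| ≤ 2` is automatic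
for `k < 2`. Along every ray from the origin the left-hand side, as a function of the squared
radius, decreases strictly from `16` to a nonpositive value while the ray stays in `|x|, |y| ≤ 2`,
so it takes the value `8 - 4k ∈ (0, 16)` exactly once. Hence radial projection is a continuous
bijection from the compact set `E_k` onto the unit sphere, i.e. a homeomorphism.
-/

open Metric Set

theorem IsCompact.nonempty_homeomorph_sphere_of_existsUnique_ray {E : Type*}
    [NormedAddCommGroup E] [NormedSpace ℝ E] {K : Set E} (hK : IsCompact K) (h0 : (0 : E) ∉ K)
    (hray : ∀ u ∈ sphere (0 : E) 1, ∃! t : ℝ, 0 < t ∧ t • u ∈ K) :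
    Nonempty (K ≃ₜ sphere (0 : E) 1) := by
  have hne (q : K) : (q : E) ≠ 0 := fun hq => h0 (hq ▸ q.2)
  let F : K → sphere (0 : E) 1 := fun q =>
    ⟨‖(q : E)‖⁻¹ • (q : E), mem_sphere_zero_iff_norm.2 (norm_smul_inv_norm (hne q))⟩
  have hF : Continuous F :=
    ((continuous_subtype_val.norm.inv₀ fun q => norm_ne_zero_iff.2 (hne q)).smul
      continuous_subtype_val).subtype_mk _
  have hinj : Function.Injective F := by
    intro p q hpq
    have hp : ‖(p : E)‖ • (F p : E) = p := smul_inv_smul₀ (norm_ne_zero_iff.2 (hne p)) _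
    have hq : ‖(q : E)‖ • (F p : E) = q := by
      rw [hpq]
      exact smul_inv_smul₀ (norm_ne_zero_iff.2 (hne q)) _
    have hnorm := (hray _ (F p).2).unique ⟨norm_pos_iff.2 (hne p), hp.symm ▸ p.2⟩
      ⟨norm_pos_iff.2 (hne q), hq.symm ▸ q.2⟩
    exact Subtype.ext (hp.symm.trans (hnorm ▸ hq))
  have hsurj : Function.Surjective F := by
    rintro ⟨u, hu⟩
    obtain ⟨t, ⟨ht, htu⟩, -⟩ := hray u hu
    refine ⟨⟨t • u, htu⟩, Subtype.ext ?_⟩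
    rw [mem_sphere_zero_iff_norm] at hu
    simp [F, norm_smul, hu, abs_of_pos ht, smul_smul, ht.ne']
  have := isCompact_iff_compactSpace.1 hK
  exact ⟨hF.homeoOfEquivCompactToT2 (f := Equiv.ofBijective F ⟨hinj, hsurj⟩)⟩

def discRay (a b d s : ℝ) : ℝ :=
  (4 - a * s) * (4 - b * s) - d * s

theorem strictAntiOn_discRay {a b d : ℝ} (ha : 0 ≤ a) (hb : 0 ≤ b) (hd : 0 ≤ d)
    (habd : 0 < a + b + d) :
    StrictAntiOn (discRay a b d) {s | 0 ≤ s ∧ a * s ≤ 4 ∧ b * s ≤ 4} := by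
  rintro s ⟨hs, -⟩ t ⟨-, hat, hbt⟩ hst
  have hpos : 0 < 4 * a + 4 * b + d - a * b * (s + t) := by
    nlinarith [mul_nonneg ha hb, mul_le_mul_of_nonneg_left hst.le (mul_nonneg ha hb),
      mul_le_mul_of_nonneg_left hat hb, mul_le_mul_of_nonneg_left hbt ha]
  have hdiff : discRay a b d s - discRay a b d t = (t - s) * (4 * a + 4 * b + d - a * b * (s + t)) := by
    unfold discRay
    ring
  linarith [mul_pos (sub_pos.2 hst) hpos]

theorem existsUnique_discRay_eq {a b d c : ℝ} (ha : 0 ≤ a) (hb : 0 ≤ b) (hd : 0 ≤ d)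
    (habd : 0 < a + b + d) (hc : c < 16) (hc' : 0 < c) :
    ∃! s, 0 < s ∧ a * s ≤ 4 ∧ b * s ≤ 4 ∧ discRay a b d s = c := by
  set M := max (max a b) (d / 4)
  have hM : 0 < M := by
    by_contra! h
    linarith [le_max_left (max a b) (d / 4), le_max_right (max a b) (d / 4),
      le_max_left a b, le_max_right a b]
  set S := 4 / M
  have hS : 0 ≤ S := (div_pos four_pos hM).le
  have hMS : M * S = 4 := mul_div_cancel₀ _ hM.ne'
  have haS : a * S ≤ 4 :=
    hMS ▸ mul_le_mul_of_nonneg_right ((le_max_left a b).trans (le_max_left _ _)) hS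
  have hbS : b * S ≤ 4 :=
    hMS ▸ mul_le_mul_of_nonneg_right ((le_max_right a b).trans (le_max_left _ _)) hS
  -- At `s = S` one of `a s ≤ 4`, `b s ≤ 4`, `d s ≤ 16` is an equality, which makes `discRay ≤ 0`.
  have hSnonpos : discRay a b d S ≤ 0 := by
    have hMabd : M = a ∨ M = b ∨ M = d / 4 := by
      rcases max_choice (max a b) (d / 4) with h | h
      · rcases max_choice a b with h' | h' <;> simp only [M, h, h', true_or, or_true]
      · simp only [M, h, or_true]
    rcases hMabd with h | h | h <;> rw [h] at hMS <;> unfold discRay <;>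
      nlinarith [mul_nonneg hd hS, mul_nonneg (sub_nonneg.2 haS) (sub_nonneg.2 hbS),
        mul_nonneg ha hS, mul_nonneg hb hS]
  obtain ⟨s, ⟨hs0, hsS⟩, hsc⟩ := intermediate_value_Icc' hS (f := discRay a b d)
    (by unfold discRay; fun_prop) ⟨hSnonpos.trans hc'.le, by norm_num [discRay]; linarith⟩
  have hs : 0 < s := hs0.lt_of_ne (by rintro rfl; norm_num [discRay] at hsc; linarith)
  have has : a * s ≤ 4 := (mul_le_mul_of_nonneg_left hsS ha).trans haS
  have hbs : b * s ≤ 4 := (mul_le_mul_of_nonneg_left hsS hb).trans hbS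
  refine ⟨s, ⟨hs, has, hbs, hsc⟩, ?_⟩
  rintro t ⟨ht, hat, hbt, htc⟩
  exact (strictAntiOn_discRay ha hb hd habd).injOn ⟨ht.le, hat, hbt⟩ ⟨hs.le, has, hbs⟩
    (htc.trans hsc.symm)

theorem mem_Icc_neg_two_two_iff_sq_le_four {x : ℝ} : x ∈ Icc (-2 : ℝ) 2 ↔ x ^ 2 ≤ 4 := by
  rw [mem_Icc, ← abs_le, show (4 : ℝ) = 2 ^ 2 by norm_num, sq_le_sq, abs_two]

theorem mem_Icc_of_kappa_le_two {p : ℝ × ℝ × ℝ} (hx : p.1 ∈ Icc (-2 : ℝ) 2)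
    (hy : p.2.1 ∈ Icc (-2 : ℝ) 2) (hκ : kappa p ≤ 2) : p.2.2 ∈ Icc (-2 : ℝ) 2 := by
  obtain ⟨x, y, z⟩ := p
  simp only [mem_Icc_neg_two_two_iff_sq_le_four, kappa] at hx hy hκ
  have hxy : x * y ≤ 4 := by nlinarith [sq_nonneg (x - y)]
  have hxy' : -4 ≤ x * y := by nlinarith [sq_nonneg (x + y)]
  -- `κ - 2 = (x ∓ y)² + (z ∓ 2)(z ± 2 - xy)`, and the second term is positive when `±z > 2`.
  rw [mem_Icc]
  constructor <;> by_contra! hz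
  · nlinarith [mul_pos (show 0 < -z - 2 by linarith) (show 0 < 2 - z + x * y by linarith),
      sq_nonneg (x + y)]
  · nlinarith [mul_pos (sub_pos.2 hz) (show 0 < z + 2 - x * y by linarith), sq_nonneg (x - y)]

theorem isCompact_Ek (k : ℝ) : IsCompact (Ek k) := by
  have hEk : Ek k = (Icc (-2) 2 ×ˢ Icc (-2) 2 ×ˢ Icc (-2) 2) ∩ kappa ⁻¹' {k} := by
    ext p
    simp only [Ek, mem_ofPred_eq, mem_inter_iff, mem_prod, mem_preimage, mem_singleton_iff,
      and_assoc]
  rw [hEk]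
  exact (isCompact_Icc.prod (isCompact_Icc.prod isCompact_Icc)).inter_right
    (isClosed_singleton.preimage (by unfold kappa; fun_prop))

noncomputable def shear : ℝ × ℝ × ℝ ≃ₜ EuclideanSpace ℝ (Fin 3) where
  toFun p := !₂[p.1, p.2.1, 2 * p.2.2 - p.1 * p.2.1]
  invFun v := (v 0, v 1, (v 2 + v 0 * v 1) / 2)
  left_inv p := by ext <;> simp
  right_inv v := by ext i; fin_cases i <;> simp [field]
  continuous_toFun := by fun_prop
  continuous_invFun := by fun_prop

def disc (v : EuclideanSpace ℝ (Fin 3)) : ℝ :=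
  (4 - v 0 ^ 2) * (4 - v 1 ^ 2) - v 2 ^ 2

theorem disc_shear (p : ℝ × ℝ × ℝ) : disc (shear p) = 8 - 4 * kappa p := by
  change (4 - p.1 ^ 2) * (4 - p.2.1 ^ 2) - (2 * p.2.2 - p.1 * p.2.1) ^ 2 = _
  rw [kappa]
  ring

theorem disc_smul (t : ℝ) (u : EuclideanSpace ℝ (Fin 3)) :
    disc (t • u) = discRay (u 0 ^ 2) (u 1 ^ 2) (u 2 ^ 2) (t ^ 2) := by
  simp only [disc, discRay, PiLp.smul_apply, smul_eq_mul]
  ring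

def discLevelSet (c : ℝ) : Set (EuclideanSpace ℝ (Fin 3)) :=
  {v | v 0 ^ 2 ≤ 4 ∧ v 1 ^ 2 ≤ 4 ∧ disc v = c}

theorem shear_image_Ek {k : ℝ} (hk : k < 2) : shear '' Ek k = discLevelSet (8 - 4 * k) := by
  ext v
  obtain ⟨p, rfl⟩ := shear.surjective v
  rw [shear.injective.mem_set_image]
  change p ∈ Ek k ↔ p.1 ^ 2 ≤ 4 ∧ p.2.1 ^ 2 ≤ 4 ∧ disc (shear p) = 8 - 4 * k
  rw [disc_shear, ← mem_Icc_neg_two_two_iff_sq_le_four, ← mem_Icc_neg_two_two_iff_sq_le_four]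
  constructor
  · rintro ⟨hx, hy, -, hκ⟩
    exact ⟨hx, hy, by rw [hκ]⟩
  · rintro ⟨hx, hy, hdisc⟩
    have hκ : kappa p = k := by linarith
    exact ⟨hx, hy, mem_Icc_of_kappa_le_two hx hy (hκ.trans_lt hk).le, hκ⟩

theorem existsUnique_smul_mem_discLevelSet {c : ℝ} (hc : c < 16) (hc' : 0 < c)
    {u : EuclideanSpace ℝ (Fin 3)} (hu : u ∈ sphere 0 1) :
    ∃! t : ℝ, 0 < t ∧ t • u ∈ discLevelSet c := by
  have hu2 : u 0 ^ 2 + u 1 ^ 2 + u 2 ^ 2 = 1 := by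
    rw [mem_sphere_zero_iff_norm, EuclideanSpace.norm_eq, Real.sqrt_eq_one] at hu
    simpa [Fin.sum_univ_three] using hu
  have hmem (t : ℝ) : t • u ∈ discLevelSet c ↔ u 0 ^ 2 * t ^ 2 ≤ 4 ∧ u 1 ^ 2 * t ^ 2 ≤ 4 ∧
      discRay (u 0 ^ 2) (u 1 ^ 2) (u 2 ^ 2) (t ^ 2) = c := by
    simp only [discLevelSet, mem_ofPred_eq, disc_smul, PiLp.smul_apply, smul_eq_mul, mul_pow,
      mul_comm]
  obtain ⟨s, ⟨hs, hsc⟩, huniq⟩ := existsUnique_discRay_eq (sq_nonneg (u 0)) (sq_nonneg (u 1))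
    (sq_nonneg (u 2)) (by rw [hu2]; exact one_pos) hc hc'
  refine ⟨√s, ⟨Real.sqrt_pos.2 hs, (hmem _).2 (by rw [Real.sq_sqrt hs.le]; exact hsc)⟩, ?_⟩
  rintro t ⟨ht, htc⟩
  rw [← huniq (t ^ 2) ⟨by positivity, (hmem t).1 htc⟩, Real.sqrt_sq ht.le]

/-- For `−2 < k < 2`, the level set `E_k`, with the subspace topology from `ℝ³`, is
homeomorphic to the standard `2`-sphere. -/
theorem Ek_homeomorphic_sphere (k : ℝ) (hk₁ : -2 < k) (hk₂ : k < 2) :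
    Nonempty (Ek k ≃ₜ Metric.sphere (0 : EuclideanSpace ℝ (Fin 3)) 1) := by
  have himage := shear_image_Ek hk₂
  have hcompact : IsCompact (discLevelSet (8 - 4 * k)) :=
    himage ▸ (isCompact_Ek k).image shear.continuous
  have hzero : (0 : EuclideanSpace ℝ (Fin 3)) ∉ discLevelSet (8 - 4 * k) := by
    rintro ⟨-, -, h⟩
    have : disc 0 = 16 := by norm_num [disc]
    linarith
  obtain ⟨e⟩ := hcompact.nonempty_homeomorph_sphere_of_existsUnique_ray hzero
    fun u hu => existsUnique_smul_mem_discLevelSet (by linarith) (by linarith) hu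
  exact ⟨(shear.image (Ek k)).trans ((Homeomorph.setCongr himage).trans e)⟩
end

section
/- Let x ∈ (−2,2) and (y,z) ∈ ℝ² with (y,z) ≠ (0,0). If there exists an integer n ≥ 1 such that the n-th iterate of τ_X fixes (x,y,z), i.e. τ_X^n(x,y,z) = (x,y,z), then arccos(x/2) is a rational multiple of π. -/
open Real

theorem tauX_iterate_fst (p : ℝ × ℝ × ℝ) (k : ℕ) : (tauX^[k] p).1 = p.1 := by
  induction k with
  | zero => rfl
  | succ k ih => rw [Function.iterate_succ_apply', ← ih]; rfl

theorem tauX_iterate_mul_sin (θ y z : ℝ) (k : ℕ) :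
    (tauX^[k] (2 * cos θ, y, z)).2.1 * sin θ = z * sin (k * θ) - y * sin (k * θ - θ) ∧
      (tauX^[k] (2 * cos θ, y, z)).2.2 * sin θ = z * sin (k * θ + θ) - y * sin (k * θ) := by
  induction k with
  | zero => simp [sin_neg]
  | succ k ih =>
    obtain ⟨ih₁, ih₂⟩ := ih
    rw [Function.iterate_succ_apply']
    simp only [tauX, tauX_iterate_fst]
    push_cast
    refine ⟨by rw [ih₂, add_mul, one_mul, add_sub_cancel_right], ?_⟩
    rw [sub_mul, mul_assoc, ih₂, ih₁, add_mul, one_mul]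
    simp only [sin_add, cos_add, sin_sub]
    linear_combination z * sin (k * θ) * sin_sq_add_cos_sq θ

theorem sq_sub_two_mul_mul_cos_add_sq_pos {θ y z : ℝ} (hθ : sin θ ≠ 0) (hyz : (y, z) ≠ (0, 0)) :
    0 < y ^ 2 - 2 * y * z * cos θ + z ^ 2 := by
  have h : y ^ 2 - 2 * y * z * cos θ + z ^ 2 = (y - z * cos θ) ^ 2 + (z * sin θ) ^ 2 := by
    linear_combination -z ^ 2 * sin_sq_add_cos_sq θ
  rw [h]
  by_cases hz : z = 0
  · have hy : y ≠ 0 := fun hy => hyz (by rw [hy, hz])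
    simp only [hz, zero_mul, sub_zero]
    positivity
  · have : 0 < (z * sin θ) ^ 2 := by positivity
    positivity

theorem sin_nat_mul_eq_zero_of_tauX_iterate_eq {θ y z : ℝ} (hθ : sin θ ≠ 0)
    (hyz : (y, z) ≠ (0, 0)) {n : ℕ} (hfix : tauX^[n] (2 * cos θ, y, z) = (2 * cos θ, y, z)) :
    sin (n * θ) = 0 := by
  obtain ⟨h₁, h₂⟩ := tauX_iterate_mul_sin θ y z n
  rw [hfix] at h₁ h₂
  simp only [sin_add, sin_sub] at h₁ h₂
  have hdet := sq_sub_two_mul_mul_cos_add_sq_pos hθ hyz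
  have : sin (n * θ) * (y ^ 2 - 2 * y * z * cos θ + z ^ 2) = 0 := by
    linear_combination y * h₂ - z * h₁
  exact (mul_eq_zero.mp this).resolve_right hdet.ne'

/-- If some positive iterate of `τ_X` fixes a point `(x,y,z)` with `−2 < x < 2` and
`(y,z) ≠ (0,0)`, then `arccos(x/2)` is a rational multiple of `π`. -/
theorem periodic_implies_rational_angle (x y z : ℝ) (hx₁ : -2 < x) (hx₂ : x < 2)
    (hyz : (y, z) ≠ ((0 : ℝ), (0 : ℝ)))
    (n : ℕ) (hn : 1 ≤ n) (hfix : tauX^[n] (x, y, z) = (x, y, z)) :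
    ∃ q : ℚ, Real.arccos (x / 2) = q * Real.pi := by
  set θ := arccos (x / 2)
  have hx : 2 * cos θ = x := by
    rw [cos_arccos (by linarith) (by linarith)]
    ring
  have hθ : sin θ ≠ 0 := by
    rw [sin_arccos]
    exact (sqrt_pos.mpr (by nlinarith)).ne'
  rw [← hx] at hfix
  obtain ⟨k, hk⟩ := sin_eq_zero_iff.mp (sin_nat_mul_eq_zero_of_tauX_iterate_eq hθ hyz hfix)
  refine ⟨k / n, ?_⟩
  have hn₀ : (n : ℝ) ≠ 0 := Nat.cast_ne_zero.mpr (by omega)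
  push_cast
  field_simp
  linarith
end
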